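/- Let G be a game structure of imperfect information and G^K its knowledge-based subset construction. For every μ-calculus formula φ and every downward-closed valuation E in the lattice of subsets, ⌈⟦φ⟧^S_E⌉ = ⟦φ⟧^A_{⌈E⌉}, where ⌈E⌉ is the valuation in the lattice of antichains defined by ⌈E⌉(x) = ⌈E(x)⌉ for all variables x. -/

import Mathlib

open scoped ENNReal

/-- A game structure of imperfect information: states `L`, alphabet `A`,
observations `O`.  The observation sets are nonempty and partition `L`. -/
structure GameStruct (L A O : Type) where
  init : L
  trans : L → A → L → Prop
  total : ∀ l a, ∃ l', trans l a l'
  obsSet : O → Set L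
  obs_nonempty : ∀ o, (obsSet o).Nonempty
  obs_cover : ∀ l, ∃ o, l ∈ obsSet o
  obs_disjoint : ∀ o o' l, l ∈ obsSet o → l ∈ obsSet o' → o = o'

/-- A finite alternating sequence `l₀ a₀ l₁ … a_{n-1} l_n`. -/
inductive Pref (L A : Type) : Type where
  | first : L → Pref L A
  | snoc : Pref L A → A → L → Pref L A

namespace Pref

variable {L A L' A' : Type}

def last : Pref L A → L
  | .first l => l
  | .snoc _ _ l => l

def start : Pref L A → L
  | .first l => l
  | .snoc ρ _ _ => ρ.start

def length : Pref L A → ℕ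
  | .first _ => 1
  | .snoc ρ _ _ => ρ.length + 1

/-- All steps of the sequence are transitions of `Δ`. -/
def Steps (Δ : L → A → L → Prop) : Pref L A → Prop
  | .first _ => True
  | .snoc ρ a l => Steps Δ ρ ∧ Δ ρ.last a l

def map (f : L → L') (g : A → A') : Pref L A → Pref L' A'
  | .first l => .first (f l)
  | .snoc ρ a l => .snoc (map f g ρ) (g a) (f l)

end Pref

namespace GameStruct

variable {L A O : Type}

/-- The unique observation of a state. -/
noncomputable def obsOf (G : GameStruct L A O) (l : L) : O := (G.obs_cover l).choose

/-- The set of prefixes of the game `G`. -/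
def Prefs (G : GameStruct L A O) : Set (Pref L A) :=
  {ρ | ρ.start = G.init ∧ Pref.Steps G.trans ρ}

/-- The observation sequence `γ⁻¹(ρ)` of a prefix. -/
noncomputable def obsSeq (G : GameStruct L A O) (ρ : Pref L A) : Pref O A :=
  ρ.map G.obsOf id

def Post (G : GameStruct L A O) (a : A) (s : Set L) : Set L :=
  {l' | ∃ l ∈ s, G.trans l a l'}

/-- The knowledge associated with a finite observation sequence. -/
noncomputable def K (G : GameStruct L A O) (τ : Pref O A) : Set L :=
  {l | ∃ ρ ∈ G.Prefs, G.obsSeq ρ = τ ∧ ρ.last = l}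

/-- Observation-based deterministic Player-1 strategy. -/
def ObsBased (G : GameStruct L A O) (α : Pref L A → A) : Prop :=
  ∀ ρ ∈ G.Prefs, ∀ ρ' ∈ G.Prefs, G.obsSeq ρ = G.obsSeq ρ' → α ρ = α ρ'

/-- Deterministic Player-2 strategy (validity condition). -/
def IsStrat2 (G : GameStruct L A O) (β : Pref L A → A → L) : Prop :=
  ∀ ρ ∈ G.Prefs, ∀ a, G.trans ρ.last a (β ρ a)

/-- Counting Player-2 strategy. -/
def Counting (G : GameStruct L A O) (β : Pref L A → A → L) : Prop :=
  ∀ ρ ∈ G.Prefs, ∀ ρ' ∈ G.Prefs,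
    ρ.length = ρ'.length → ρ.last = ρ'.last → ∀ a, β ρ a = β ρ' a

end GameStruct

/-- The sequence of prefixes resulting from playing `α` against `β` from `s0`. -/
def outPrefGen {S A : Type} (s0 : S) (α : Pref S A → A) (β : Pref S A → A → S) : ℕ → Pref S A
  | 0 => .first s0
  | n + 1 =>
      .snoc (outPrefGen s0 α β n) (α (outPrefGen s0 α β n))
        (β (outPrefGen s0 α β n) (α (outPrefGen s0 α β n)))

/-- The outcome play (state stream, letter stream) of `α` against `β` from `s0`. -/
def outcomeGen {S A : Type} (s0 : S) (α : Pref S A → A) (β : Pref S A → A → S) :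
    (ℕ → S) × (ℕ → A) :=
  (fun n => (outPrefGen s0 α β n).last, fun n => α (outPrefGen s0 α β n))

namespace GameStruct

variable {L A O : Type}

/-- Transition relation `Δᴷ` of the knowledge-based subset construction `Gᴷ`. -/
def transK (G : GameStruct L A O) (s1 : Set L) (a : A) (s2 : Set L) : Prop :=
  (∃ o, s2 = G.Post a s1 ∩ G.obsSet o) ∧ s2.Nonempty

/-- Prefixes of the game `Gᴷ` of perfect information. -/
def PrefsK (G : GameStruct L A O) : Set (Pref (Set L) A) :=
  {ρ | ρ.start = {G.init} ∧ Pref.Steps G.transK ρ}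

/-- A cell `s` is reachable in `Gᴷ`. -/
def ReachableK (G : GameStruct L A O) (s : Set L) : Prop :=
  ∃ ρ ∈ G.PrefsK, ρ.last = s

open Classical in
/-- The unique observation `o` with `s ⊆ γ(o)` (when it exists). -/
noncomputable def obsK (G : GameStruct L A O) (s : Set L) : O :=
  if h : ∃ o, s ⊆ G.obsSet o then h.choose else G.obsOf G.init

/-- Deterministic Player-2 strategy in `Gᴷ` (validity condition). -/
def IsStrat2K (G : GameStruct L A O) (β : Pref (Set L) A → A → Set L) : Prop :=
  ∀ ρ ∈ G.PrefsK, ∀ a, G.transK ρ.last a (β ρ a)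

/-- Player 1 sure wins `G` for objective `φ ⊆ (O × Σ)^ω` with a deterministic
observation-based strategy. -/
def SureWinG (G : GameStruct L A O) (φ : Set ((ℕ → O) × (ℕ → A))) : Prop :=
  ∃ α : Pref L A → A, G.ObsBased α ∧
    ∀ β, G.IsStrat2 β →
      ((fun n => G.obsOf ((outcomeGen G.init α β).1 n)), (outcomeGen G.init α β).2) ∈ φ

/-- Player 1 sure wins `Gᴷ` for objective `φ ⊆ (O × Σ)^ω` with a deterministic strategy. -/
def SureWinK (G : GameStruct L A O) (φ : Set ((ℕ → O) × (ℕ → A))) : Prop :=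
  ∃ α : Pref (Set L) A → A,
    ∀ β, G.IsStrat2K β →
      ((fun n => G.obsK ((outcomeGen ({G.init} : Set L) α β).1 n)),
        (outcomeGen ({G.init} : Set L) α β).2) ∈ φ

end GameStruct

/-- `⌈q⌉`, the set of maximal elements of `q`. -/
def ceil {L : Type} (q : Set (Set L)) : Set (Set L) :=
  {s | s ∈ q ∧ s.Nonempty ∧ ∀ s' ∈ q, ¬ s ⊂ s'}

/-- `q` is an antichain of nonempty subsets of `L`. -/
def IsAC {L : Type} (q : Set (Set L)) : Prop :=
  (∀ s ∈ q, s.Nonempty) ∧ ∀ s ∈ q, ∀ s' ∈ q, ¬ s ⊂ s'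

/-- The type of antichains of nonempty subsets of `L`. -/
def ACL (L : Type) : Type := {q : Set (Set L) // IsAC q}

/-- The order `⊑` on antichains. -/
def acle {L : Type} (q q' : ACL L) : Prop := ∀ s ∈ q.1, ∃ s' ∈ q'.1, s ⊆ s'

theorem ceil_isAC {L : Type} (q : Set (Set L)) : IsAC (ceil q) :=
  ⟨fun _ hs => hs.2.1, fun _ hs s' hs' => hs.2.2 s' hs'.1⟩

/-- The join `q ⊔ q' = ⌈{s | s ∈ q or s ∈ q'}⌉`. -/
def joinOp {L : Type} (q q' : Set (Set L)) : Set (Set L) := ceil (q ∪ q')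

/-- The meet `q ⊓ q' = ⌈{s ∩ s' | s ∈ q and s' ∈ q'}⌉`. -/
def meetOp {L : Type} (q q' : Set (Set L)) : Set (Set L) :=
  ceil {t | ∃ s ∈ q, ∃ s' ∈ q', t = s ∩ s'}

theorem topAC (L : Type) [Nonempty L] : IsAC ({Set.univ} : Set (Set L)) := by
  constructor
  · intro s hs
    rw [Set.mem_singleton_iff] at hs
    subst hs
    exact Set.univ_nonempty
  · intro s hs s' hs'
    rw [Set.mem_singleton_iff] at hs hs'
    subst hs; subst hs'
    exact fun h => absurd h (lt_irrefl _)

theorem botAC (L : Type) : IsAC (∅ : Set (Set L)) :=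
  ⟨fun s hs => absurd hs (Set.notMem_empty s),
   fun s hs => absurd hs (Set.notMem_empty s)⟩

/-- `q ⊆ 𝓛`, i.e. all members of `q` are nonempty. -/
def NESets {L : Type} (q : Set (Set L)) : Prop := ∀ s ∈ q, s.Nonempty

/-- `q` is downward closed (within nonempty sets). -/
def DownClosed {L : Type} (q : Set (Set L)) : Prop :=
  ∀ s ∈ q, ∀ t, t ⊆ s → t.Nonempty → t ∈ q

namespace GameStruct

variable {L A O : Type}

/-- Controllable predecessor operator on `2^𝓛` (w.r.t. `Gᴷ`). -/
def CPre (G : GameStruct L A O) (q : Set (Set L)) : Set (Set L) :=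
  {s | s.Nonempty ∧ ∃ a, ∀ s', G.transK s a s' → s' ∈ q}

end GameStruct

/-- μ-calculus formulas over atomic propositions `O` and variables `V`. -/
inductive MuForm (O V : Type) : Type where
  | atom : O → MuForm O V
  | var : V → MuForm O V
  | or : MuForm O V → MuForm O V → MuForm O V
  | and : MuForm O V → MuForm O V → MuForm O V
  | pre : MuForm O V → MuForm O V
  | mu : V → MuForm O V → MuForm O V
  | nu : V → MuForm O V → MuForm O V

/-- Semantics of μ-calculus formulas in the lattice of subsets `S = 2^𝓛`. -/
def semS {L A O V : Type} [DecidableEq V] (G : GameStruct L A O) :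
    MuForm O V → (V → Set (Set L)) → Set (Set L)
  | .atom o, _ => {s | s.Nonempty ∧ s ⊆ G.obsSet o}
  | .var x, E => E x
  | .or φ ψ, E => semS G φ E ∪ semS G ψ E
  | .and φ ψ, E => semS G φ E ∩ semS G ψ E
  | .pre φ, E => G.CPre (semS G φ E)
  | .mu x φ, E => ⋂₀ {q | NESets q ∧ q = semS G φ (Function.update E x q)}
  | .nu x φ, E => ⋃₀ {q | NESets q ∧ q = semS G φ (Function.update E x q)}

/-- Greatest lower bound of a family of antichains. -/
def sInfA {L : Type} (Q : Set (Set (Set L))) : Set (Set L) :=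
  ceil {s | s.Nonempty ∧ ∀ q ∈ Q, ∃ s' ∈ q, s ⊆ s'}

/-- Least upper bound of a family of antichains. -/
def sSupA {L : Type} (Q : Set (Set (Set L))) : Set (Set L) := ceil (⋃₀ Q)

/-- The antichain controllable predecessor operator `⌈CPre⌉`. -/
def GameStruct.cpreA {L A O : Type} (G : GameStruct L A O) (q : Set (Set L)) : Set (Set L) :=
  ceil {s | s.Nonempty ∧ ∃ a, ∀ o, ∃ s' ∈ q, G.Post a s ∩ G.obsSet o ⊆ s'}

/-- Semantics of μ-calculus formulas in the lattice of antichains. -/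
def semA {L A O V : Type} [DecidableEq V] (G : GameStruct L A O) :
    MuForm O V → (V → Set (Set L)) → Set (Set L)
  | .atom o, _ => {G.obsSet o}
  | .var x, E => E x
  | .or φ ψ, E => joinOp (semA G φ E) (semA G ψ E)
  | .and φ ψ, E => meetOp (semA G φ E) (semA G ψ E)
  | .pre φ, E => G.cpreA (semA G φ E)
  | .mu x φ, E => sInfA {q | IsAC q ∧ q = semA G φ (Function.update E x q)}
  | .nu x φ, E => sSupA {q | IsAC q ∧ q = semA G φ (Function.update E x q)}

namespace GameStruct

variable {L A O : Type}

/-- Membership in the state set `Q` of `H = Knw(G)`. -/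
def inQ (G : GameStruct L A O) (p : Set L × L) : Prop :=
  (∃ o, p.1 ⊆ G.obsSet o) ∧ p.2 ∈ p.1

/-- The transition relation `Δ_H` of `H = Knw(G)` (restricted to `Q`). -/
def transH (G : GameStruct L A O) (p : Set L × L) (a : A) (p' : Set L × L) : Prop :=
  G.inQ p ∧ G.inQ p' ∧ (∃ o, p'.1 = G.Post a p.1 ∩ G.obsSet o) ∧ G.trans p.2 a p'.2

/-- The map `h : Prefs(G) → Prefs(H)`. -/
noncomputable def hmap (G : GameStruct L A O) : Pref L A → Pref (Set L × L) A
  | .first l => .first (G.K (G.obsSeq (.first l)), l)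
  | .snoc ρ a l => .snoc (G.hmap ρ) a (G.K (G.obsSeq (.snoc ρ a l)), l)

/-- Prefixes of `H = Knw(G)`. -/
def PrefsH (G : GameStruct L A O) : Set (Pref (Set L × L) A) :=
  {ρ | ρ.start = ({G.init}, G.init) ∧ Pref.Steps G.transH ρ}

end GameStruct

/-- Equivalence `≈` of prefixes of `H`. -/
def prefEquiv {L A : Type} : Pref (Set L × L) A → Pref (Set L × L) A → Prop
  | .first q, .first q' => q.1 = q'.1
  | .snoc ρ a q, .snoc ρ' a' q' => prefEquiv ρ ρ' ∧ a = a' ∧ q.1 = q'.1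
  | _, _ => False

/-- Randomized Player-1 strategy (each value is a probability distribution). -/
def IsP1Rand {S A : Type} (α : Pref S A → A → ℝ≥0∞) : Prop := ∀ ρ, (∑' a, α ρ a) = 1

namespace GameStruct

variable {L A O : Type}

/-- Observation-based randomized Player-1 strategy in `G`. -/
def ObsBasedR (G : GameStruct L A O) (α : Pref L A → A → ℝ≥0∞) : Prop :=
  ∀ ρ ∈ G.Prefs, ∀ ρ' ∈ G.Prefs, G.obsSeq ρ = G.obsSeq ρ' → α ρ = α ρ'

/-- Equivalence-preserving randomized Player-1 strategy in `H` (on `Prefs(H)`). -/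
def EqPres (G : GameStruct L A O) (α : Pref (Set L × L) A → A → ℝ≥0∞) : Prop :=
  ∀ ρ ∈ G.PrefsH, ∀ ρ' ∈ G.PrefsH, prefEquiv ρ ρ' → α ρ = α ρ'

/-- Equivalence-preserving randomized Player-1 strategy in `H` (on all valid
prefixes of `H`, from arbitrary start states). -/
def EqPres' (G : GameStruct L A O) (α : Pref (Set L × L) A → A → ℝ≥0∞) : Prop :=
  ∀ ρ ρ' : Pref (Set L × L) A, Pref.Steps G.transH ρ → Pref.Steps G.transH ρ' →
    prefEquiv ρ ρ' → α ρ = α ρ'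

/-- Randomized Player-2 strategy in `G` (validity). -/
def IsP2RandG (G : GameStruct L A O) (β : Pref L A → A → L → ℝ≥0∞) : Prop :=
  ∀ ρ a, (∑' l, β ρ a l) = 1 ∧ ∀ l, β ρ a l ≠ 0 → G.trans ρ.last a l

/-- Randomized Player-2 strategy in `H` (validity). -/
def IsP2RandH (G : GameStruct L A O)
    (β : Pref (Set L × L) A → A → (Set L × L) → ℝ≥0∞) : Prop :=
  ∀ ρ a, G.inQ (Pref.last ρ) →
    (∑' q, β ρ a q) = 1 ∧ ∀ q, β ρ a q ≠ 0 → G.transH ρ.last a q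

end GameStruct

/-- `ḡ` on Player-1 strategies. -/
noncomputable def gbar1 {L A O : Type} (G : GameStruct L A O)
    (αH : Pref (Set L × L) A → A → ℝ≥0∞) : Pref L A → A → ℝ≥0∞ :=
  fun ρ => αH (G.hmap ρ)

/-- The projection `h⁻¹ : Prefs(H) → Prefs(G)`. -/
def projH {L A : Type} : Pref (Set L × L) A → Pref L A := Pref.map Prod.snd id

/-- `h̄` on Player-1 strategies. -/
def hbar1 {L A : Type} (αG : Pref L A → A → ℝ≥0∞) :
    Pref (Set L × L) A → A → ℝ≥0∞ := fun ρ => αG (projH ρ)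

/-- `ḡ` on Player-2 strategies: `ḡ(β_H)(ρ,a)(l') = β_H(h(ρ),a)(s',l')` for the unique
`s'` with `((K(γ⁻¹(ρ)), Last ρ), a, (s',l')) ∈ Δ_H`, and `0` if there is none. -/
noncomputable def GameStruct.gbar2 {L A O : Type} (G : GameStruct L A O)
    (βH : Pref (Set L × L) A → A → (Set L × L) → ℝ≥0∞) : Pref L A → A → L → ℝ≥0∞ :=
  fun ρ a l' =>
    ∑' s' : {s' : Set L // G.transH (G.K (G.obsSeq ρ), ρ.last) a (s', l')},
      βH (G.hmap ρ) a (s'.1, l')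

open Classical in
/-- `h̄` on Player-2 strategies. -/
noncomputable def GameStruct.hbar2 {L A O : Type} (G : GameStruct L A O)
    (βG : Pref L A → A → L → ℝ≥0∞) :
    Pref (Set L × L) A → A → (Set L × L) → ℝ≥0∞ :=
  fun ρ a q => if G.transH ρ.last a q then βG (projH ρ) a q.2 else 0

open Classical in
/-- The probability of the cone of a prefix under a pair of randomized
strategies, starting from `s0`. -/
noncomputable def conePr {S A : Type} (s0 : S)
    (α : Pref S A → A → ℝ≥0∞) (β : Pref S A → A → S → ℝ≥0∞) : Pref S A → ℝ≥0∞
  | .first s => if s = s0 then 1 else 0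
  | .snoc ρ a s => conePr s0 α β ρ * α ρ a * β ρ a s

section Theorems

variable {L A O V : Type}

/-! ### Auxiliary lemmas about `ceil`, antichains, and downward closures -/

/-- The top element `𝓛` of the lattice of NE-sets. -/
def NEtop (L : Type) : Set (Set L) := {s | s.Nonempty}

/-- The downward closure (within nonempty sets) of a family of sets. -/
def down (q : Set (Set L)) : Set (Set L) := {t | t.Nonempty ∧ ∃ s ∈ q, t ⊆ s}

lemma ceil_subset (q : Set (Set L)) : ceil q ⊆ q := fun _ h => h.1

lemma exists_ceil_superset [Finite L] {q : Set (Set L)} {s : Set L}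
    (hs : s ∈ q) (hne : s.Nonempty) : ∃ s' ∈ ceil q, s ⊆ s' := by
  obtain ⟨a, ha, hmax⟩ := Set.Finite.exists_maximalFor id {t ∈ q | s ⊆ t}
    (Set.toFinite _) ⟨s, hs, le_refl s⟩
  refine ⟨a, ⟨ha.1, hne.mono ha.2, ?_⟩, ha.2⟩
  intro s' hs' hlt
  have h2 : a = s' := le_antisymm hlt.subset (hmax (j := s') ⟨hs', ha.2.trans hlt.subset⟩ hlt.subset)
  exact hlt.ne h2

lemma down_ceil [Finite L] {q : Set (Set L)} (hne : NESets q) (hdc : DownClosed q) :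
    down (ceil q) = q := by
  ext t
  constructor
  · rintro ⟨htne, s, hs, hts⟩; exact hdc s hs.1 t hts htne
  · intro ht
    obtain ⟨s', hs', hts⟩ := exists_ceil_superset ht (hne t ht)
    exact ⟨hne t ht, s', hs', hts⟩

lemma ceil_down {q : Set (Set L)} (h : IsAC q) : ceil (down q) = q := by
  ext s; constructor
  · rintro ⟨⟨hne, s', hs', hss⟩, -, hmax⟩
    have : s = s' := by
      by_contra hne'
      exact hmax s' ⟨h.1 s' hs', s', hs', le_refl _⟩ (ssubset_of_subset_of_ne hss hne')
    exact this ▸ hs'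
  · intro hs
    refine ⟨⟨h.1 s hs, s, hs, le_refl _⟩, h.1 s hs, ?_⟩
    rintro t ⟨-, t', ht', htt⟩ hst
    exact h.2 s hs t' ht' (lt_of_lt_of_le hst htt)

lemma ceil_eq_of_between [Finite L] {p r : Set (Set L)} (h1 : ceil p ⊆ r) (h2 : r ⊆ p) :
    ceil r = ceil p := by
  ext s; constructor
  · rintro ⟨hs, hne, hmax⟩
    refine ⟨h2 hs, hne, ?_⟩
    intro u hu hsu
    obtain ⟨v, hv, huv⟩ := exists_ceil_superset hu (hne.mono hsu.subset)
    exact hmax v (h1 hv) (lt_of_lt_of_le hsu huv)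
  · rintro ⟨hs, hne, hmax⟩
    exact ⟨h1 ⟨hs, hne, hmax⟩, hne, fun u hu => hmax u (h2 hu)⟩

lemma joinOp_ceil [Finite L] (p q : Set (Set L)) :
    joinOp (ceil p) (ceil q) = ceil (p ∪ q) := by
  refine ceil_eq_of_between ?_ (Set.union_subset_union (ceil_subset p) (ceil_subset q))
  rintro s ⟨hs, hne, hmax⟩
  cases hs with
  | inl h => exact Or.inl ⟨h, hne, fun u hu => hmax u (Or.inl hu)⟩
  | inr h => exact Or.inr ⟨h, hne, fun u hu => hmax u (Or.inr hu)⟩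

lemma meetOp_ceil [Finite L] {p q : Set (Set L)}
    (hpne : NESets p) (hpdc : DownClosed p) (hqne : NESets q) (hqdc : DownClosed q) :
    meetOp (ceil p) (ceil q) = ceil (p ∩ q) := by
  ext t; constructor
  · rintro ⟨⟨s, hs, s', hs', rfl⟩, hne, hmax⟩
    have htp : s ∩ s' ∈ p := hpdc s hs.1 _ Set.inter_subset_left hne
    have htq : s ∩ s' ∈ q := hqdc s' hs'.1 _ Set.inter_subset_right hne
    refine ⟨⟨htp, htq⟩, hne, ?_⟩
    rintro u ⟨hup, huq⟩ hsu
    have hune : u.Nonempty := hne.mono hsu.subset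
    obtain ⟨a, ha, hua⟩ := exists_ceil_superset hup hune
    obtain ⟨b, hb, hub⟩ := exists_ceil_superset huq hune
    exact hmax (a ∩ b) ⟨a, ha, b, hb, rfl⟩
      (lt_of_lt_of_le hsu (Set.subset_inter hua hub))
  · rintro ⟨⟨htp, htq⟩, hne, hmax⟩
    obtain ⟨s, hs, hts⟩ := exists_ceil_superset htp hne
    obtain ⟨s', hs', hts'⟩ := exists_ceil_superset htq hne
    have hsub : t ⊆ s ∩ s' := Set.subset_inter hts hts'
    have hin : s ∩ s' ∈ p ∩ q :=
      ⟨hpdc s hs.1 _ Set.inter_subset_left (hne.mono hsub),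
       hqdc s' hs'.1 _ Set.inter_subset_right (hne.mono hsub)⟩
    have heq : t = s ∩ s' := by
      rcases eq_or_ne t (s ∩ s') with h | h
      · exact h
      · exact absurd (ssubset_of_subset_of_ne hsub h) (hmax _ hin)
    refine ⟨⟨s, hs, s', hs', heq⟩, hne, ?_⟩
    rintro u ⟨a, ha, b, hb, rfl⟩ htu
    have : a ∩ b ∈ p ∩ q :=
      ⟨hpdc a ha.1 _ Set.inter_subset_left (hne.mono htu.subset),
       hqdc b hb.1 _ Set.inter_subset_right (hne.mono htu.subset)⟩
    exact hmax _ this htu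

/-! ### Fixpoint machinery on the lattice of NE-sets -/

lemma chain_stab {α : Type} [Finite α] [PartialOrder α] (g : ℕ → α)
    (h : ∀ n, g n ≤ g (n + 1)) : ∃ m, g (m + 1) = g m := by
  have hmono : Monotone g := monotone_nat_of_le_succ h
  obtain ⟨a, b, hab, heq⟩ := Finite.exists_ne_map_eq_of_infinite g
  rcases hab.lt_or_gt with h1 | h1
  · refine ⟨a, le_antisymm ?_ (h a)⟩
    have := hmono (Nat.succ_le_of_lt h1)
    rwa [← heq] at this
  · refine ⟨b, le_antisymm ?_ (h b)⟩
    have := hmono (Nat.succ_le_of_lt h1)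
    rwa [heq] at this

lemma chain_stab' {α : Type} [Finite α] [PartialOrder α] (g : ℕ → α)
    (h : ∀ n, g (n + 1) ≤ g n) : ∃ m, g (m + 1) = g m := by
  obtain ⟨m, hm⟩ := chain_stab (α := αᵒᵈ) g h
  exact ⟨m, hm⟩

lemma muFix [Finite L] (f : Set (Set L) → Set (Set L))
    (hmono : ∀ p q, NESets p → NESets q → p ⊆ q → f p ⊆ f q)
    (hne : ∀ p, NESets p → NESets (f p)) :
    ∃ P : Set (Set L), NESets P ∧ f P = P ∧
      (∀ q, NESets q → f q ⊆ q → P ⊆ q) ∧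
      ∀ C : Set (Set L) → Prop, C ∅ → (∀ p, NESets p → C p → C (f p)) → C P := by
  let g : ℕ → Set (Set L) := fun n => Nat.rec ∅ (fun _ p => f p) n
  have hgne : ∀ n, NESets (g n) := by
    intro n; induction n with
    | zero => exact fun s hs => absurd hs (Set.notMem_empty s)
    | succ n ih => exact hne _ ih
  have hgmono : ∀ n, g n ≤ g (n + 1) := by
    intro n; induction n with
    | zero => exact Set.empty_subset _
    | succ n ih => exact hmono _ _ (hgne n) (hgne (n + 1)) ih
  obtain ⟨m, hm⟩ := chain_stab g hgmono
  refine ⟨g m, hgne m, hm, ?_, ?_⟩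
  · intro q hq hfq
    have : ∀ n, g n ⊆ q := by
      intro n; induction n with
      | zero => exact Set.empty_subset _
      | succ n ih => exact (hmono _ _ (hgne n) hq ih).trans hfq
    exact this m
  · intro C h0 hstep
    have : ∀ n, C (g n) := by
      intro n; induction n with
      | zero => exact h0
      | succ n ih => exact hstep _ (hgne n) ih
    exact this m

lemma nuFix [Finite L] (f : Set (Set L) → Set (Set L))
    (hmono : ∀ p q, NESets p → NESets q → p ⊆ q → f p ⊆ f q)
    (hne : ∀ p, NESets p → NESets (f p)) :
    ∃ P : Set (Set L), NESets P ∧ f P = P ∧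
      (∀ q, NESets q → q ⊆ f q → q ⊆ P) ∧
      ∀ C : Set (Set L) → Prop, C (NEtop L) → (∀ p, NESets p → C p → C (f p)) → C P := by
  let g : ℕ → Set (Set L) := fun n => Nat.rec (NEtop L) (fun _ p => f p) n
  have hgne : ∀ n, NESets (g n) := by
    intro n; induction n with
    | zero => exact fun s hs => hs
    | succ n ih => exact hne _ ih
  have hganti : ∀ n, g (n + 1) ≤ g n := by
    intro n; induction n with
    | zero => exact fun s hs => hgne 1 s hs
    | succ n ih => exact hmono _ _ (hgne (n + 1)) (hgne n) ih
  obtain ⟨m, hm⟩ := chain_stab' g hganti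
  refine ⟨g m, hgne m, hm, ?_, ?_⟩
  · intro q hq hfq
    have : ∀ n, q ⊆ g n := by
      intro n; induction n with
      | zero => exact fun s hs => hq s hs
      | succ n ih => exact hfq.trans (hmono _ _ hq (hgne n) ih)
    exact this m
  · intro C h0 hstep
    have : ∀ n, C (g n) := by
      intro n; induction n with
      | zero => exact h0
      | succ n ih => exact hstep _ (hgne n) ih
    exact this m

lemma sInter_fix_eq (f : Set (Set L) → Set (Set L)) (P : Set (Set L))
    (hPne : NESets P) (hPfix : f P = P)
    (hleast : ∀ q, NESets q → f q ⊆ q → P ⊆ q) :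
    ⋂₀ {q | NESets q ∧ q = f q} = P := by
  apply subset_antisymm
  · exact Set.sInter_subset_of_mem ⟨hPne, hPfix.symm⟩
  · exact Set.subset_sInter (fun q hq => hleast q hq.1 (le_of_eq hq.2.symm))

lemma sUnion_fix_eq (f : Set (Set L) → Set (Set L)) (P : Set (Set L))
    (hPne : NESets P) (hPfix : f P = P)
    (hgreat : ∀ q, NESets q → q ⊆ f q → q ⊆ P) :
    ⋃₀ {q | NESets q ∧ q = f q} = P := by
  apply subset_antisymm
  · exact Set.sUnion_subset (fun q hq => hgreat q hq.1 (le_of_eq hq.2))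
  · exact Set.subset_sUnion_of_mem ⟨hPne, hPfix.symm⟩

/-! ### Valuation update lemmas -/

lemma updNE [DecidableEq V] {E : V → Set (Set L)} {p : Set (Set L)}
    (hE : ∀ y, NESets (E y)) (hp : NESets p) (x : V) :
    ∀ y, NESets (Function.update E x p y) := by
  intro y
  rcases eq_or_ne y x with rfl | h
  · rw [Function.update_self]; exact hp
  · rw [Function.update_of_ne h]; exact hE y

lemma updDC [DecidableEq V] {E : V → Set (Set L)} {p : Set (Set L)}
    (hE : ∀ y, NESets (E y) ∧ DownClosed (E y)) (hpne : NESets p) (hpdc : DownClosed p) (x : V) :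
    ∀ y, NESets (Function.update E x p y) ∧ DownClosed (Function.update E x p y) := by
  intro y
  rcases eq_or_ne y x with rfl | h
  · rw [Function.update_self]; exact ⟨hpne, hpdc⟩
  · rw [Function.update_of_ne h]; exact hE y

lemma updle [DecidableEq V] {E E' : V → Set (Set L)} {p p' : Set (Set L)}
    (hle : ∀ y, E y ⊆ E' y) (hpp : p ⊆ p') (x : V) :
    ∀ y, Function.update E x p y ⊆ Function.update E' x p' y := by
  intro y
  rcases eq_or_ne y x with rfl | h
  · rw [Function.update_self, Function.update_self]; exact hpp
  · rw [Function.update_of_ne h, Function.update_of_ne h]; exact hle y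

lemma ceil_upd [DecidableEq V] (E : V → Set (Set L)) (x : V) (q : Set (Set L)) :
    (fun y => ceil (Function.update E x q y)) =
      Function.update (fun y => ceil (E y)) x (ceil q) := by
  funext y
  rcases eq_or_ne y x with rfl | h
  · rw [Function.update_self, Function.update_self]
  · rw [Function.update_of_ne h, Function.update_of_ne h]

/-! ### Monotonicity and NE-preservation of `semS` -/

lemma semS_ne_mono [Finite L] [DecidableEq V] (G : GameStruct L A O) (φ : MuForm O V) :
    (∀ E : V → Set (Set L), (∀ x, NESets (E x)) → NESets (semS G φ E)) ∧
    (∀ E E' : V → Set (Set L), (∀ x, NESets (E x)) → (∀ x, NESets (E' x)) →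
      (∀ x, E x ⊆ E' x) → semS G φ E ⊆ semS G φ E') := by
  induction φ with
  | atom o => exact ⟨fun E _ s hs => hs.1, fun E E' _ _ _ => le_refl _⟩
  | var x => exact ⟨fun E hE => hE x, fun E E' _ _ h => h x⟩
  | or φ ψ ihφ ihψ =>
    refine ⟨fun E hE s hs => ?_, fun E E' h1 h2 h3 =>
      Set.union_subset_union (ihφ.2 E E' h1 h2 h3) (ihψ.2 E E' h1 h2 h3)⟩
    cases hs with
    | inl h => exact ihφ.1 E hE s h
    | inr h => exact ihψ.1 E hE s h
  | and φ ψ ihφ ihψ =>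
    exact ⟨fun E hE s hs => ihφ.1 E hE s hs.1, fun E E' h1 h2 h3 =>
      Set.inter_subset_inter (ihφ.2 E E' h1 h2 h3) (ihψ.2 E E' h1 h2 h3)⟩
  | pre φ ih =>
    refine ⟨fun E _ s hs => hs.1, fun E E' h1 h2 h3 => ?_⟩
    rintro s ⟨hsne, a, hsucc⟩
    exact ⟨hsne, a, fun s' ht => ih.2 E E' h1 h2 h3 (hsucc s' ht)⟩
  | mu x φ ih =>
    have key : ∀ E : V → Set (Set L), (∀ y, NESets (E y)) →
        ∃ P : Set (Set L), NESets P ∧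
          semS G φ (Function.update E x P) = P ∧
          (∀ q, NESets q → semS G φ (Function.update E x q) ⊆ q → P ⊆ q) ∧
          semS G (.mu x φ) E = P := by
      intro E hE
      obtain ⟨P, hPne, hPfix, hleast, -⟩ :=
        muFix (fun p => semS G φ (Function.update E x p))
          (fun p q hp hq hpq => ih.2 _ _ (updNE hE hp x) (updNE hE hq x)
            (updle (fun y => le_refl _) hpq x))
          (fun p hp => ih.1 _ (updNE hE hp x))
      exact ⟨P, hPne, hPfix, hleast,
        sInter_fix_eq (fun p => semS G φ (Function.update E x p)) P hPne hPfix hleast⟩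
    constructor
    · intro E hE
      obtain ⟨P, hPne, -, -, hsem⟩ := key E hE
      rw [show semS G (.mu x φ) E =
        ⋂₀ {q | NESets q ∧ q = semS G φ (Function.update E x q)} from rfl] at hsem ⊢
      rw [hsem]; exact hPne
    · intro E E' hE hE' hle
      obtain ⟨P, hPne, hPfix, hleast, hsem⟩ := key E hE
      obtain ⟨P', hP'ne, hP'fix, hleast', hsem'⟩ := key E' hE'
      rw [hsem, hsem']
      refine hleast P' hP'ne ?_
      have : semS G φ (Function.update E x P') ⊆ semS G φ (Function.update E' x P') :=
        ih.2 _ _ (updNE hE hP'ne x) (updNE hE' hP'ne x) (updle hle (le_refl _) x)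
      exact this.trans (le_of_eq hP'fix)
  | nu x φ ih =>
    have key : ∀ E : V → Set (Set L), (∀ y, NESets (E y)) →
        ∃ P : Set (Set L), NESets P ∧
          semS G φ (Function.update E x P) = P ∧
          (∀ q, NESets q → q ⊆ semS G φ (Function.update E x q) → q ⊆ P) ∧
          semS G (.nu x φ) E = P := by
      intro E hE
      obtain ⟨P, hPne, hPfix, hgreat, -⟩ :=
        nuFix (fun p => semS G φ (Function.update E x p))
          (fun p q hp hq hpq => ih.2 _ _ (updNE hE hp x) (updNE hE hq x)
            (updle (fun y => le_refl _) hpq x))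
          (fun p hp => ih.1 _ (updNE hE hp x))
      exact ⟨P, hPne, hPfix, hgreat,
        sUnion_fix_eq (fun p => semS G φ (Function.update E x p)) P hPne hPfix hgreat⟩
    constructor
    · intro E hE
      obtain ⟨P, hPne, -, -, hsem⟩ := key E hE
      rw [hsem]; exact hPne
    · intro E E' hE hE' hle
      obtain ⟨P, hPne, hPfix, hgreat, hsem⟩ := key E hE
      obtain ⟨P', hP'ne, hP'fix, hgreat', hsem'⟩ := key E' hE'
      rw [hsem, hsem']
      refine hgreat' P hPne ?_
      have : semS G φ (Function.update E x P) ⊆ semS G φ (Function.update E' x P) :=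
        ih.2 _ _ (updNE hE hPne x) (updNE hE' hPne x) (updle hle (le_refl _) x)
      exact (le_of_eq hPfix.symm).trans this

/-! ### The main induction -/

lemma semS_main [Finite L] [DecidableEq V] (G : GameStruct L A O) (φ : MuForm O V) :
    ∀ E : V → Set (Set L), (∀ x, NESets (E x) ∧ DownClosed (E x)) →
      NESets (semS G φ E) ∧ DownClosed (semS G φ E) ∧
      ceil (semS G φ E) = semA G φ (fun x => ceil (E x)) := by
  induction φ with
  | atom o =>
    intro E hE
    refine ⟨fun s hs => hs.1, fun s hs t hts htne => ⟨htne, hts.trans hs.2⟩, ?_⟩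
    show ceil {s : Set L | s.Nonempty ∧ s ⊆ G.obsSet o} = {G.obsSet o}
    ext s; constructor
    · rintro ⟨⟨hsne, hsub⟩, -, hmax⟩
      have : s = G.obsSet o := by
        rcases eq_or_ne s (G.obsSet o) with h | h
        · exact h
        · exact absurd (ssubset_of_subset_of_ne hsub h)
            (hmax _ ⟨G.obs_nonempty o, le_refl _⟩)
      exact this
    · rintro rfl
      exact ⟨⟨G.obs_nonempty o, le_refl _⟩, G.obs_nonempty o,
        fun s' hs' h => h.not_subset hs'.2⟩
  | var x => exact fun E hE => ⟨(hE x).1, (hE x).2, rfl⟩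
  | or φ ψ ihφ ihψ =>
    intro E hE
    obtain ⟨h1, h2, h3⟩ := ihφ E hE
    obtain ⟨h4, h5, h6⟩ := ihψ E hE
    refine ⟨?_, ?_, ?_⟩
    · rintro s (hs | hs)
      · exact h1 s hs
      · exact h4 s hs
    · rintro s (hs | hs) t hts htne
      · exact Or.inl (h2 s hs t hts htne)
      · exact Or.inr (h5 s hs t hts htne)
    · show ceil (semS G φ E ∪ semS G ψ E) =
        joinOp (semA G φ (fun x => ceil (E x))) (semA G ψ (fun x => ceil (E x)))
      rw [← h3, ← h6, joinOp_ceil]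
  | and φ ψ ihφ ihψ =>
    intro E hE
    obtain ⟨h1, h2, h3⟩ := ihφ E hE
    obtain ⟨h4, h5, h6⟩ := ihψ E hE
    refine ⟨fun s hs => h1 s hs.1,
      fun s hs t hts htne => ⟨h2 s hs.1 t hts htne, h5 s hs.2 t hts htne⟩, ?_⟩
    show ceil (semS G φ E ∩ semS G ψ E) =
      meetOp (semA G φ (fun x => ceil (E x))) (semA G ψ (fun x => ceil (E x)))
    rw [← h3, ← h6, meetOp_ceil h1 h2 h4 h5]
  | pre φ ih =>
    intro E hE
    obtain ⟨hne, hdc, hceil⟩ := ih E hE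
    refine ⟨fun s hs => hs.1, ?_, ?_⟩
    · rintro s ⟨hsne, a, hsucc⟩ t hts htne
      refine ⟨htne, a, ?_⟩
      rintro s' ⟨⟨o, rfl⟩, hs'ne⟩
      have h1 : G.Post a t ∩ G.obsSet o ⊆ G.Post a s ∩ G.obsSet o := by
        apply Set.inter_subset_inter_left
        rintro l' ⟨l, hl, htr⟩; exact ⟨l, hts hl, htr⟩
      have h2 : (G.Post a s ∩ G.obsSet o).Nonempty := hs'ne.mono h1
      exact hdc _ (hsucc _ ⟨⟨o, rfl⟩, h2⟩) _ h1 hs'ne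
    · have hXY : G.CPre (semS G φ E) = {s | s.Nonempty ∧ ∃ a, ∀ o,
          ∃ s' ∈ ceil (semS G φ E), G.Post a s ∩ G.obsSet o ⊆ s'} := by
        ext s; constructor
        · rintro ⟨hsne, a, hsucc⟩
          refine ⟨hsne, a, ?_⟩
          obtain ⟨l, hl⟩ := hsne
          obtain ⟨l', hl'⟩ := G.total l a
          obtain ⟨o₀, ho₀⟩ := G.obs_cover l'
          have hu₀ : (G.Post a s ∩ G.obsSet o₀).Nonempty := ⟨l', ⟨l, hl, hl'⟩, ho₀⟩
          obtain ⟨v, hv, -⟩ :=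
            exists_ceil_superset (hsucc _ ⟨⟨o₀, rfl⟩, hu₀⟩) hu₀
          intro o
          rcases Set.eq_empty_or_nonempty (G.Post a s ∩ G.obsSet o) with he | hne'
          · exact ⟨v, hv, he ▸ Set.empty_subset v⟩
          · obtain ⟨w, hw, hsw⟩ := exists_ceil_superset (hsucc _ ⟨⟨o, rfl⟩, hne'⟩) hne'
            exact ⟨w, hw, hsw⟩
        · rintro ⟨hsne, a, hsucc⟩
          refine ⟨hsne, a, ?_⟩
          rintro s' ⟨⟨o, rfl⟩, hs'ne⟩
          obtain ⟨w, hw, hsw⟩ := hsucc o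
          exact hdc w hw.1 _ hsw hs'ne
      show ceil (G.CPre (semS G φ E)) = G.cpreA (semA G φ (fun x => ceil (E x)))
      rw [← hceil, hXY]
      rfl
  | mu x φ ih =>
    intro E hE
    have hEne : ∀ y, NESets (E y) := fun y => (hE y).1
    obtain ⟨P, hPne, hPfix, hleast, hClos⟩ :=
      muFix (fun p => semS G φ (Function.update E x p))
        (fun p q hp hq hpq => (semS_ne_mono G φ).2 _ _ (updNE hEne hp x)
          (updNE hEne hq x) (updle (fun y => le_refl _) hpq x))
        (fun p hp => (semS_ne_mono G φ).1 _ (updNE hEne hp x))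
    have hPdc : DownClosed P :=
      hClos DownClosed (fun s hs => absurd hs (Set.notMem_empty s))
        (fun p hpne hpdc => (ih _ (updDC hE hpne hpdc x)).2.1)
    have hsem : semS G (.mu x φ) E = P :=
      sInter_fix_eq (fun p => semS G φ (Function.update E x p)) P hPne hPfix hleast
    have key : ∀ q : Set (Set L), NESets q → DownClosed q →
        ceil (semS G φ (Function.update E x q)) =
          semA G φ (Function.update (fun y => ceil (E y)) x (ceil q)) := by
      intro q hqne hqdc
      rw [← ceil_upd]
      exact (ih _ (updDC hE hqne hqdc x)).2.2
    have hmem : ceil P ∈ {q | IsAC q ∧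
        q = semA G φ (Function.update (fun y => ceil (E y)) x q)} := by
      refine ⟨ceil_isAC P, ?_⟩
      have := key P hPne hPdc
      rw [hPfix] at this
      exact this
    have hdown : ∀ q ∈ {q | IsAC q ∧
        q = semA G φ (Function.update (fun y => ceil (E y)) x q)}, P ⊆ down q := by
      rintro q ⟨hqAC, hqfix⟩
      have hdqne : NESets (down q) := fun t ht => ht.1
      have hdqdc : DownClosed (down q) := by
        rintro s ⟨hsne, u, hu, hsu⟩ t hts htne
        exact ⟨htne, u, hu, hts.trans hsu⟩
      have h2 := ih _ (updDC hE hdqne hdqdc x)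
      have h1 : ceil (semS G φ (Function.update E x (down q))) = q := by
        have := key _ hdqne hdqdc
        rw [ceil_down hqAC] at this
        rw [this, ← hqfix]
      have hfix : semS G φ (Function.update E x (down q)) = down q := by
        have h3 := down_ceil h2.1 h2.2.1
        rw [h1] at h3
        rw [← h3]
      exact hleast _ hdqne (le_of_eq hfix)
    refine ⟨hsem ▸ hPne, hsem ▸ hPdc, ?_⟩
    rw [hsem]
    show ceil P = sInfA {q | IsAC q ∧
      q = semA G φ (Function.update (fun y => ceil (E y)) x q)}
    have hW : {s : Set L | s.Nonempty ∧ ∀ q ∈ {q | IsAC q ∧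
        q = semA G φ (Function.update (fun y => ceil (E y)) x q)}, ∃ s' ∈ q, s ⊆ s'} = P := by
      ext s; constructor
      · rintro ⟨hsne, hall⟩
        obtain ⟨s', hs', hss⟩ := hall (ceil P) hmem
        exact hPdc s' hs'.1 s hss hsne
      · intro hs
        refine ⟨hPne s hs, fun q hq => ?_⟩
        obtain ⟨-, s', hs', hss⟩ := hdown q hq hs
        exact ⟨s', hs', hss⟩
    show ceil P = ceil {s : Set L | s.Nonempty ∧ ∀ q ∈ {q | IsAC q ∧
      q = semA G φ (Function.update (fun y => ceil (E y)) x q)}, ∃ s' ∈ q, s ⊆ s'}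
    rw [hW]
  | nu x φ ih =>
    intro E hE
    have hEne : ∀ y, NESets (E y) := fun y => (hE y).1
    obtain ⟨P, hPne, hPfix, hgreat, hClos⟩ :=
      nuFix (fun p => semS G φ (Function.update E x p))
        (fun p q hp hq hpq => (semS_ne_mono G φ).2 _ _ (updNE hEne hp x)
          (updNE hEne hq x) (updle (fun y => le_refl _) hpq x))
        (fun p hp => (semS_ne_mono G φ).1 _ (updNE hEne hp x))
    have hPdc : DownClosed P :=
      hClos DownClosed (fun s _ t _ htne => htne)
        (fun p hpne hpdc => (ih _ (updDC hE hpne hpdc x)).2.1)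
    have hsem : semS G (.nu x φ) E = P :=
      sUnion_fix_eq (fun p => semS G φ (Function.update E x p)) P hPne hPfix hgreat
    have key : ∀ q : Set (Set L), NESets q → DownClosed q →
        ceil (semS G φ (Function.update E x q)) =
          semA G φ (Function.update (fun y => ceil (E y)) x (ceil q)) := by
      intro q hqne hqdc
      rw [← ceil_upd]
      exact (ih _ (updDC hE hqne hqdc x)).2.2
    have hmem : ceil P ∈ {q | IsAC q ∧
        q = semA G φ (Function.update (fun y => ceil (E y)) x q)} := by
      refine ⟨ceil_isAC P, ?_⟩
      have := key P hPne hPdc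
      rw [hPfix] at this
      exact this
    have hsub : ∀ q ∈ {q | IsAC q ∧
        q = semA G φ (Function.update (fun y => ceil (E y)) x q)}, q ⊆ P := by
      rintro q ⟨hqAC, hqfix⟩
      have hdqne : NESets (down q) := fun t ht => ht.1
      have hdqdc : DownClosed (down q) := by
        rintro s ⟨hsne, u, hu, hsu⟩ t hts htne
        exact ⟨htne, u, hu, hts.trans hsu⟩
      have h2 := ih _ (updDC hE hdqne hdqdc x)
      have h1 : ceil (semS G φ (Function.update E x (down q))) = q := by
        have := key _ hdqne hdqdc
        rw [ceil_down hqAC] at this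
        rw [this, ← hqfix]
      have hfix : semS G φ (Function.update E x (down q)) = down q := by
        have h3 := down_ceil h2.1 h2.2.1
        rw [h1] at h3
        rw [← h3]
      have hdq : down q ⊆ P := hgreat _ hdqne (le_of_eq hfix.symm)
      exact fun s hs => hdq ⟨hqAC.1 s hs, s, hs, le_refl _⟩
    refine ⟨hsem ▸ hPne, hsem ▸ hPdc, ?_⟩
    rw [hsem]
    show ceil P = sSupA {q | IsAC q ∧
      q = semA G φ (Function.update (fun y => ceil (E y)) x q)}
    refine (ceil_eq_of_between ?_ ?_).symm
    · exact fun s hs => ⟨ceil P, hmem, hs⟩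
    · exact Set.sUnion_subset hsub

theorem stmt_10 [Finite L] [Finite A] [Finite O] [DecidableEq V] (G : GameStruct L A O)
    (φ : MuForm O V) (E : V → Set (Set L))
    (hE : ∀ x, NESets (E x) ∧ DownClosed (E x)) :
    ceil (semS G φ E) = semA G φ (fun x => ceil (E x)) :=
  (semS_main G φ E hE).2.2

end Theorems
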